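/- arXiv:1410.2963 — 6 statements merged into one kernel-verified Lean document; each statement's English description precedes it below -/
import Mathlib

section
/- Let m, n be positive integers, let A1, A2 be arbitrary m×n complex matrices, and let A3 (n×n) and A4 (m×m) be Hermitian positive definite complex matrices. Then ∫ DS exp(−tr(A3 Sᴴ A4 S + A1ᴴ S − Sᴴ A2)) = det(A3 ⊗ A4)^{−1} · exp(−tr(A3^{−1} A1ᴴ A4^{−1} A2)), where the integral ranges over all m×n complex matrices S and ⊗ denotes the Kronecker product of matrices. -/
/-!
Diagonalise `A3 = V D Vᴴ` and `A4 = U E Uᴴ` with `U`, `V` unitary and `D`, `E` positive diagonal.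
The substitution `S = U T Vᴴ` preserves `Re tr(Sᴴ S')`, the Euclidean inner product of
`ℂ^{m×n} ≅ ℝ^{2mn}`, hence Lebesgue measure, and it turns the exponent into
`∑ᵢⱼ (-eᵢ dⱼ |Tᵢⱼ|² - conj(B₁ᵢⱼ) Tᵢⱼ + B₂ᵢⱼ conj(Tᵢⱼ))` with `Bₖ = Uᴴ Aₖ V`. The integral factors
into `mn` Gaussians over `ℂ`, `∫ exp(-a|z|² + bz + c z̄) = (π/a) exp(bc/a)`, whose prefactors
multiply to `π^{mn} / det(D ⊗ E)` and whose exponents add up to `-tr(D⁻¹ B₁ᴴ E⁻¹ B₂)`.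
-/

open MeasureTheory Matrix Complex
open scoped Kronecker ComplexOrder Real ComplexConjugate

theorem LinearMap.measurePreserving_of_repr_dotProduct {E κ : Type*} [NormedAddCommGroup E]
    [NormedSpace ℝ E] [MeasurableSpace E] [BorelSpace E] [FiniteDimensional ℝ E]
    [Fintype κ] [DecidableEq κ] (b : Module.Basis κ ℝ E) (μ : Measure E) [μ.IsAddHaarMeasure]
    (L : E →ₗ[ℝ] E)
    (hL : ∀ x y, ⇑(b.repr (L x)) ⬝ᵥ ⇑(b.repr (L y)) = ⇑(b.repr x) ⬝ᵥ ⇑(b.repr y)) :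
    MeasurePreserving L μ μ := by
  set A := LinearMap.toMatrix b b L
  have hA : Aᵀ * A = 1 := by
    ext i j
    simpa [A, Matrix.mul_apply, dotProduct, LinearMap.toMatrix_apply, Matrix.one_apply,
      Finsupp.single_apply, eq_comm] using hL (b i) (b j)
  have hdet : |LinearMap.det L| = 1 := by
    have h := congrArg Matrix.det hA
    rw [det_mul, det_transpose, det_one, LinearMap.det_toMatrix, ← abs_mul_abs_self] at h
    nlinarith [abs_nonneg (LinearMap.det L)]
  have hdet0 : LinearMap.det L ≠ 0 := abs_ne_zero.mp (hdet ▸ one_ne_zero)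
  refine ⟨L.continuous_of_finiteDimensional.measurable, ?_⟩
  rw [Measure.map_linearMap_addHaar_eq_smul_addHaar μ hdet0, abs_inv, hdet, inv_one,
    ENNReal.ofReal_one, one_smul]

namespace Matrix

variable {ι κ : Type*} [Fintype ι] [Fintype κ]

theorem trace_conjTranspose_mul_eq_sum (X Y : Matrix ι κ ℂ) :
    trace (Xᴴ * Y) = ∑ i, ∑ j, conj (X i j) * Y i j := by
  rw [trace, Finset.sum_comm]
  simp [Matrix.mul_apply]

def mulLeftRightₗ (U : Matrix ι ι ℂ) (W : Matrix κ κ ℂ) : (ι → κ → ℂ) →ₗ[ℝ] ι → κ → ℂ where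
  toFun S := of.symm (U * of S * W)
  map_add' S T := by simp [← of_add_of, Matrix.mul_add, Matrix.add_mul]; rfl
  map_smul' c S := by simp [← smul_of, Matrix.mul_smul, Matrix.smul_mul]; rfl

theorem dotProduct_repr_basisOneI (X Y : ι → κ → ℂ) :
    ⇑((Pi.basis fun _ : ι => Pi.basis fun _ : κ => basisOneI).repr X) ⬝ᵥ
      ⇑((Pi.basis fun _ : ι => Pi.basis fun _ : κ => basisOneI).repr Y) =
      (trace ((of X)ᴴ * of Y)).re := by
  rw [trace_conjTranspose_mul_eq_sum, re_sum, dotProduct, ← Finset.univ_sigma_univ,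
    Finset.sum_sigma]
  refine Finset.sum_congr rfl fun i _ => ?_
  rw [re_sum, ← Finset.univ_sigma_univ, Finset.sum_sigma]
  refine Finset.sum_congr rfl fun j _ => ?_
  simp [Fin.sum_univ_two, Pi.basis_repr, mul_re]

variable [DecidableEq ι] [DecidableEq κ]

theorem trace_diagonal_mul_conjTranspose_mul_diagonal_mul
    (f : κ → ℂ) (g : ι → ℂ) (X Y : Matrix ι κ ℂ) :
    trace (diagonal f * Xᴴ * diagonal g * Y) = ∑ i, ∑ j, f j * conj (X i j) * g i * Y i j := by
  rw [trace, Finset.sum_comm]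
  refine Finset.sum_congr rfl fun j _ => ?_
  rw [diag_apply, Matrix.mul_apply]
  simp [mul_diagonal, diagonal_mul]

theorem conjTranspose_mul_cancel_left {ι' : Type*} {U : Matrix ι ι ℂ} (hU : Uᴴ * U = 1)
    (X : Matrix ι ι' ℂ) : Uᴴ * (U * X) = X := by
  rw [← Matrix.mul_assoc, hU, Matrix.one_mul]

theorem trace_conjTranspose_mul_unitary {U : Matrix ι ι ℂ} {V : Matrix κ κ ℂ}
    (hU : Uᴴ * U = 1) (hV : Vᴴ * V = 1) (X Y : Matrix ι κ ℂ) :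
    trace ((U * X * Vᴴ)ᴴ * (U * Y * Vᴴ)) = trace (Xᴴ * Y) := by
  simp only [conjTranspose_mul, conjTranspose_conjTranspose, Matrix.mul_assoc,
    conjTranspose_mul_cancel_left hU]
  rw [trace_mul_comm]
  simp only [Matrix.mul_assoc, hV, Matrix.mul_one]

theorem trace_unitary_conj {U : Matrix ι ι ℂ} {V : Matrix κ κ ℂ}
    (hU : Uᴴ * U = 1) (hV : Vᴴ * V = 1) (P : Matrix κ κ ℂ) (Q : Matrix ι ι ℂ)
    (X Y : Matrix ι κ ℂ) :
    trace (V * P * Vᴴ * (U * X * Vᴴ)ᴴ * (U * Q * Uᴴ) * (U * Y * Vᴴ)) =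
      trace (P * Xᴴ * Q * Y) := by
  simp only [conjTranspose_mul, conjTranspose_conjTranspose, Matrix.mul_assoc,
    conjTranspose_mul_cancel_left hU, conjTranspose_mul_cancel_left hV]
  rw [trace_mul_comm]
  simp only [Matrix.mul_assoc, hV, Matrix.mul_one]

theorem det_mul_mul_conjTranspose {V : Matrix κ κ ℂ} (hV : Vᴴ * V = 1)
    (P : Matrix κ κ ℂ) : det (V * P * Vᴴ) = det P := by
  rw [det_mul, det_mul, mul_comm, ← mul_assoc, ← det_mul, hV, det_one, one_mul]

theorem inv_mul_mul_conjTranspose {V : Matrix κ κ ℂ} (hV : Vᴴ * V = 1)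
    (hV' : V * Vᴴ = 1) (P : Matrix κ κ ℂ) : (V * P * Vᴴ)⁻¹ = V * P⁻¹ * Vᴴ := by
  rw [Matrix.mul_inv_rev, Matrix.mul_inv_rev, inv_eq_left_inv hV, inv_eq_left_inv hV',
    Matrix.mul_assoc]

theorem inv_diagonal_of_ne_zero {v : κ → ℂ} (hv : ∀ j, v j ≠ 0) :
    (diagonal v)⁻¹ = diagonal fun j => (v j)⁻¹ :=
  inv_eq_left_inv (by rw [diagonal_mul_diagonal]; simp [hv])

theorem exists_eq_mul_mul_conjTranspose {U : Matrix ι ι ℂ} {V : Matrix κ κ ℂ}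
    (hU' : U * Uᴴ = 1) (hV' : V * Vᴴ = 1) (A : Matrix ι κ ℂ) : ∃ B : Matrix ι κ ℂ, A = U * B * Vᴴ :=
  ⟨Uᴴ * A * V, by
    rw [← Matrix.mul_assoc U, ← Matrix.mul_assoc U, hU', Matrix.one_mul, Matrix.mul_assoc, hV',
      Matrix.mul_one]⟩

theorem PosDef.exists_eq_unitary_mul_diagonal_mul_conjTranspose
    {A : Matrix κ κ ℂ} (hA : A.PosDef) :
    ∃ V : Matrix κ κ ℂ, Vᴴ * V = 1 ∧ V * Vᴴ = 1 ∧
      ∃ d : κ → ℝ, (∀ j, 0 < d j) ∧ A = V * diagonal (fun j => (d j : ℂ)) * Vᴴ :=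
  ⟨hA.1.eigenvectorUnitary, Unitary.star_mul_self_of_mem hA.1.eigenvectorUnitary.2,
    Unitary.mul_star_self_of_mem hA.1.eigenvectorUnitary.2, hA.1.eigenvalues, hA.eigenvalues_pos,
    hA.1.spectral_theorem⟩

theorem mulLeftRightₗ_injective {U : Matrix ι ι ℂ} {W : Matrix κ κ ℂ}
    (hU : Uᴴ * U = 1) (hW : W * Wᴴ = 1) : Function.Injective (mulLeftRightₗ U W) := by
  intro S T h
  have h' : U * of S * W = U * of T * W := of.symm.injective h
  simpa [Matrix.mul_assoc, conjTranspose_mul_cancel_left hU, hW] using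
    congrArg (fun M => Uᴴ * M * Wᴴ) h'

theorem measurePreserving_mulLeftRightₗ {U : Matrix ι ι ℂ} {V : Matrix κ κ ℂ}
    (hU : Uᴴ * U = 1) (hV : Vᴴ * V = 1) :
    MeasurePreserving (mulLeftRightₗ U Vᴴ) volume volume := by
  have : (volume : Measure (ι → κ → ℂ)).IsOpenPosMeasure := Measure.pi.isOpenPosMeasure _
  have : (volume : Measure (ι → κ → ℂ)).IsAddHaarMeasure := ⟨⟩
  refine LinearMap.measurePreserving_of_repr_dotProduct
    (Pi.basis fun _ : ι => Pi.basis fun _ : κ => basisOneI) _ _ fun S T => ?_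
  rw [dotProduct_repr_basisOneI, dotProduct_repr_basisOneI]
  exact congrArg re (trace_conjTranspose_mul_unitary hU hV (of S) (of T))

theorem integral_comp_mul_mul_unitary {E : Type*} [NormedAddCommGroup E] [NormedSpace ℝ E]
    {U : Matrix ι ι ℂ} {V : Matrix κ κ ℂ} (hU : Uᴴ * U = 1) (hV : Vᴴ * V = 1)
    (g : Matrix ι κ ℂ → E) :
    ∫ T : ι → κ → ℂ, g (U * of T * Vᴴ) = ∫ S : ι → κ → ℂ, g (of S) := by
  have hV' : Vᴴ * Vᴴᴴ = 1 := by rwa [conjTranspose_conjTranspose]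
  exact (measurePreserving_mulLeftRightₗ hU hV).integral_comp
    ((mulLeftRightₗ U Vᴴ).isClosedEmbedding_of_injective
      (LinearMap.ker_eq_bot.mpr (mulLeftRightₗ_injective hU hV'))).measurableEmbedding (g ∘ of)

end Matrix

theorem integral_cexp_neg_mul_normSq_add {a : ℝ} (ha : 0 < a) (b c : ℂ) :
    ∫ z : ℂ, cexp (-a * (conj z * z) + b * z + c * conj z) = π / a * cexp (b * c / a) := by
  have ha' : (-(a : ℂ)).re < 0 := by simpa using ha
  -- in real coordinates `z = x + y I` the integrand splits into two real Gaussians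
  have hsplit : ∀ x y : ℝ, cexp (-a * (conj (x + y * I) * (x + y * I)) + b * (x + y * I) +
      c * conj (x + y * I)) =
        cexp (-a * (x : ℂ) ^ 2 + (b + c) * x + 0) * cexp (-a * (y : ℂ) ^ 2 + (b - c) * I * y + 0) := by
    intro x y
    rw [← Complex.exp_add]
    congr 1
    simp only [map_add, map_mul, conj_ofReal, conj_I]
    ring_nf
    rw [I_sq]
    ring
  simp only [← mk_eq_add_mul_I] at hsplit
  rw [← volume_preserving_equiv_real_prod.symm.integral_comp', Measure.volume_eq_prod]
  simp only [measurableEquivRealProd_symm_apply, hsplit]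
  rw [integral_prod_mul (fun x : ℝ => cexp (-a * (x : ℂ) ^ 2 + (b + c) * x + 0))
    (fun y : ℝ => cexp (-a * (y : ℂ) ^ 2 + (b - c) * I * y + 0)),
    integral_cexp_quadratic ha', integral_cexp_quadratic ha']
  have hpi : (π / -(-(a : ℂ))) ≠ 0 := by simp [Real.pi_ne_zero, ha.ne']
  rw [mul_mul_mul_comm, ← cpow_add _ _ hpi, add_halves, cpow_one, neg_neg, ← Complex.exp_add]
  congr 2
  rw [mul_pow, I_sq]
  field_simp
  ring

section Gaussian

variable {ι κ : Type*} [Fintype ι] [Fintype κ]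

theorem integral_cexp_sum_neg_mul_normSq_add {a : ι → κ → ℝ} (ha : ∀ i j, 0 < a i j)
    (b c : ι → κ → ℂ) :
    ∫ T : ι → κ → ℂ,
        cexp (∑ i, ∑ j, (-a i j * (conj (T i j) * T i j) + b i j * T i j + c i j * conj (T i j))) =
      ∏ i, ∏ j, π / a i j * cexp (b i j * c i j / a i j) := by
  simp_rw [Complex.exp_sum]
  rw [volume_pi, integral_fintype_prod_eq_prod (fun i (Tᵢ : κ → ℂ) => ∏ j, cexp
    (-a i j * (conj (Tᵢ j) * Tᵢ j) + b i j * Tᵢ j + c i j * conj (Tᵢ j)))]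
  refine Finset.prod_congr rfl fun i _ => ?_
  rw [volume_pi, integral_fintype_prod_eq_prod (fun j (z : ℂ) => cexp
    (-a i j * (conj z * z) + b i j * z + c i j * conj z))]
  exact Finset.prod_congr rfl fun j _ => integral_cexp_neg_mul_normSq_add (ha i j) _ _

variable [DecidableEq ι] [DecidableEq κ]

theorem integral_gaussian_diagonal {d : κ → ℝ} {e : ι → ℝ} (hd : ∀ j, 0 < d j)
    (he : ∀ i, 0 < e i) (B₁ B₂ : Matrix ι κ ℂ) :
    ∫ T : ι → κ → ℂ, cexp (-trace (diagonal (fun j => (d j : ℂ)) * (of T)ᴴ *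
        diagonal (fun i => (e i : ℂ)) * of T + B₁ᴴ * of T - (of T)ᴴ * B₂)) =
      π ^ (Fintype.card ι * Fintype.card κ) *
        (det (diagonal (fun j => (d j : ℂ)) ⊗ₖ diagonal (fun i => (e i : ℂ))))⁻¹ *
        cexp (-trace ((diagonal fun j => (d j : ℂ))⁻¹ * B₁ᴴ *
          (diagonal fun i => (e i : ℂ))⁻¹ * B₂)) := by
  have hexp : ∀ T : ι → κ → ℂ, -trace (diagonal (fun j => (d j : ℂ)) * (of T)ᴴ *
        diagonal (fun i => (e i : ℂ)) * of T + B₁ᴴ * of T - (of T)ᴴ * B₂) =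
      ∑ i, ∑ j, (-(e i * d j : ℝ) * (conj (T i j) * T i j) + -conj (B₁ i j) * T i j +
        B₂ i j * conj (T i j)) := by
    intro T
    rw [trace_sub, trace_add, trace_diagonal_mul_conjTranspose_mul_diagonal_mul,
      trace_conjTranspose_mul_eq_sum, trace_conjTranspose_mul_eq_sum]
    simp only [← Finset.sum_add_distrib, ← Finset.sum_sub_distrib, ← Finset.sum_neg_distrib]
    refine Finset.sum_congr rfl fun i _ => Finset.sum_congr rfl fun j _ => ?_
    simp only [of_apply]
    push_cast
    ring
  have hdet : det (diagonal (fun j => (d j : ℂ)) ⊗ₖ diagonal (fun i => (e i : ℂ))) =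
      ∏ i, ∏ j, ((e i * d j : ℝ) : ℂ) := by
    rw [diagonal_kronecker_diagonal, det_diagonal, Fintype.prod_prod_type, Finset.prod_comm]
    simp [mul_comm]
  have hpi : ∏ i, ∏ j, (π : ℂ) / (e i * d j : ℝ) =
      π ^ (Fintype.card ι * Fintype.card κ) * (∏ i, ∏ j, ((e i * d j : ℝ) : ℂ))⁻¹ := by
    simp only [div_eq_mul_inv, Finset.prod_mul_distrib, Finset.prod_inv_distrib,
      Finset.prod_const, Finset.card_univ]
    ring
  simp_rw [hexp]
  rw [integral_cexp_sum_neg_mul_normSq_add (a := fun i j => e i * d j)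
      (fun i j => mul_pos (he i) (hd j)) (fun i j => -conj (B₁ i j)) (fun i j => B₂ i j),
    Finset.prod_congr rfl fun i _ => Finset.prod_mul_distrib, Finset.prod_mul_distrib, hdet, hpi,
    inv_diagonal_of_ne_zero fun j => ofReal_ne_zero.mpr (hd j).ne',
    inv_diagonal_of_ne_zero fun i => ofReal_ne_zero.mpr (he i).ne',
    trace_diagonal_mul_conjTranspose_mul_diagonal_mul]
  simp_rw [← Complex.exp_sum]
  congr 2
  rw [← Finset.sum_neg_distrib]
  refine Finset.sum_congr rfl fun i _ => ?_
  rw [← Finset.sum_neg_distrib]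
  refine Finset.sum_congr rfl fun j _ => ?_
  push_cast
  field_simp

theorem integral_gaussian_unitary_conj {U : Matrix ι ι ℂ} {V : Matrix κ κ ℂ}
    (hU : Uᴴ * U = 1) (hV : Vᴴ * V = 1) (P : Matrix κ κ ℂ) (Q : Matrix ι ι ℂ)
    (B₁ B₂ : Matrix ι κ ℂ) :
    ∫ S : ι → κ → ℂ, cexp (-trace (V * P * Vᴴ * (of S)ᴴ * (U * Q * Uᴴ) * of S +
        (U * B₁ * Vᴴ)ᴴ * of S - (of S)ᴴ * (U * B₂ * Vᴴ))) =
      ∫ T : ι → κ → ℂ, cexp (-trace (P * (of T)ᴴ * Q * of T + B₁ᴴ * of T - (of T)ᴴ * B₂)) := by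
  refine (integral_comp_mul_mul_unitary hU hV fun S => cexp (-trace (V * P * Vᴴ * Sᴴ *
    (U * Q * Uᴴ) * S + (U * B₁ * Vᴴ)ᴴ * S - Sᴴ * (U * B₂ * Vᴴ)))).symm.trans ?_
  simp only [trace_sub, trace_add, trace_unitary_conj hU hV, trace_conjTranspose_mul_unitary hU hV]

end Gaussian

theorem statement0_general (m n : ℕ)
    (A1 A2 : Matrix (Fin m) (Fin n) ℂ)
    (A3 : Matrix (Fin n) (Fin n) ℂ) (A4 : Matrix (Fin m) (Fin m) ℂ)
    (hA3 : A3.PosDef) (hA4 : A4.PosDef) :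
    (1 / (Real.pi : ℂ) ^ (m * n)) *
      (∫ S : Fin m → Fin n → ℂ,
        Complex.exp (-Matrix.trace (A3 * (Matrix.of S)ᴴ * A4 * Matrix.of S
          + A1ᴴ * Matrix.of S - (Matrix.of S)ᴴ * A2))) =
    (Matrix.det (A3 ⊗ₖ A4))⁻¹ *
      Complex.exp (-Matrix.trace (A3⁻¹ * A1ᴴ * A4⁻¹ * A2)) := by
  obtain ⟨V, hV, hV', d, hd, rfl⟩ := hA3.exists_eq_unitary_mul_diagonal_mul_conjTranspose
  obtain ⟨U, hU, hU', e, he, rfl⟩ := hA4.exists_eq_unitary_mul_diagonal_mul_conjTranspose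
  obtain ⟨B₁, rfl⟩ := exists_eq_mul_mul_conjTranspose hU' hV' A1
  obtain ⟨B₂, rfl⟩ := exists_eq_mul_mul_conjTranspose hU' hV' A2
  rw [integral_gaussian_unitary_conj hU hV, integral_gaussian_diagonal hd he, det_kronecker,
    det_kronecker, det_mul_mul_conjTranspose hV, det_mul_mul_conjTranspose hU,
    inv_mul_mul_conjTranspose hV hV', inv_mul_mul_conjTranspose hU hU', trace_unitary_conj hU hV,
    Fintype.card_fin, Fintype.card_fin]
  have hπ : (π : ℂ) ^ (m * n) ≠ 0 := pow_ne_zero _ (ofReal_ne_zero.mpr Real.pi_ne_zero)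
  field_simp

/-- Gaussian matrix integral (Lemma 1 of the paper). -/
theorem statement0 (m n : ℕ) (hm : 0 < m) (hn : 0 < n)
    (A1 A2 : Matrix (Fin m) (Fin n) ℂ)
    (A3 : Matrix (Fin n) (Fin n) ℂ) (A4 : Matrix (Fin m) (Fin m) ℂ)
    (hA3 : A3.PosDef) (hA4 : A4.PosDef) :
    (1 / (Real.pi : ℂ) ^ (m * n)) *
      (∫ S : Fin m → Fin n → ℂ,
        Complex.exp (-Matrix.trace (A3 * (Matrix.of S)ᴴ * A4 * Matrix.of S
          + A1ᴴ * Matrix.of S - (Matrix.of S)ᴴ * A2))) =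
    (Matrix.det (A3 ⊗ₖ A4))⁻¹ *
      Complex.exp (-Matrix.trace (A3⁻¹ * A1ᴴ * A4⁻¹ * A2)) :=
  statement0_general m n A1 A2 A3 A4 hA3 hA4
end

section
/- Let n be a positive integer, let d₁ ≤ d₂ ≤ … ≤ d_n be positive real numbers, and let γ₁ ≤ γ₂ ≤ … ≤ γ_n be nonnegative real numbers. Let D = diag(d₁, …, d_n) and Γ = diag(γ₁, …, γ_n). Then for every n×n unitary complex matrix W, Re tr(D^{−1} W Γ Wᴴ) ≥ Σ_{i=1}^n γ_i / d_i, with equality when W = I. -/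
open Matrix

private lemma key_ds {n : ℕ} (c g : Fin n → ℝ) (hc : Antitone c) (hg : Monotone g)
    (P : Matrix (Fin n) (Fin n) ℝ) (hP : P ∈ doublyStochastic ℝ (Fin n)) :
    ∑ i, c i * g i ≤ ∑ i, ∑ j, c i * g j * P i j := by
  obtain ⟨w, hw0, hw1, rfl⟩ := exists_eq_sum_perm_of_mem_doublyStochastic hP
  have hperm : ∀ σ : Equiv.Perm (Fin n),
      ∑ i, ∑ j, c i * g j * (σ.permMatrix ℝ) i j = ∑ i, c i * g (σ i) := by
    intro σ
    refine Finset.sum_congr rfl fun i _ => ?_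
    simp [Equiv.Perm.permMatrix, PEquiv.toMatrix_apply, Equiv.toPEquiv_apply,
      mul_ite, Finset.sum_ite_eq' Finset.univ (σ i)]
  have hanti : Antivary c g := hc.antivary hg
  calc ∑ i, c i * g i = ∑ σ : Equiv.Perm (Fin n), w σ * ∑ i, c i * g i := by
        rw [← Finset.sum_mul, hw1, one_mul]
    _ ≤ ∑ σ : Equiv.Perm (Fin n), w σ * ∑ i, c i * g (σ i) := by
        refine Finset.sum_le_sum fun σ _ => mul_le_mul_of_nonneg_left ?_ (hw0 σ)
        simpa [smul_eq_mul] using hanti.sum_smul_le_sum_smul_comp_perm (σ := σ)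
    _ = ∑ σ : Equiv.Perm (Fin n), ∑ i, ∑ j, w σ * (c i * g j * (σ.permMatrix ℝ) i j) := by
        refine Finset.sum_congr rfl fun σ _ => ?_
        rw [← hperm σ, Finset.mul_sum]
        exact Finset.sum_congr rfl fun i _ => Finset.mul_sum _ _ _
    _ = ∑ i, ∑ σ : Equiv.Perm (Fin n), ∑ j, w σ * (c i * g j * (σ.permMatrix ℝ) i j) :=
        Finset.sum_comm
    _ = ∑ i, ∑ j, ∑ σ : Equiv.Perm (Fin n), w σ * (c i * g j * (σ.permMatrix ℝ) i j) :=
        Finset.sum_congr rfl fun i _ => Finset.sum_comm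
    _ = ∑ i, ∑ j, c i * g j * (∑ σ : Equiv.Perm (Fin n), w σ • σ.permMatrix ℝ) i j := by
        refine Finset.sum_congr rfl fun i _ => Finset.sum_congr rfl fun j _ => ?_
        simp only [Matrix.sum_apply, Matrix.smul_apply, smul_eq_mul, Finset.mul_sum]
        exact Finset.sum_congr rfl fun σ _ => by ring

/-- trace inequality for oppositely ordered diagonal matrices
(cf. Palomar, Eq. (3.158)), with equality at `W = I`. -/
theorem statement9 (n : ℕ) (hn : 0 < n)
    (d γ : Fin n → ℝ) (hd : Monotone d) (hdpos : ∀ i, 0 < d i)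
    (hγ : Monotone γ) (hγnonneg : ∀ i, 0 ≤ γ i) :
    (∀ W : Matrix (Fin n) (Fin n) ℂ, W ∈ Matrix.unitaryGroup (Fin n) ℂ →
      (∑ i, γ i / d i) ≤
        (Matrix.trace ((Matrix.diagonal (fun i => (d i : ℂ)))⁻¹ * W *
          Matrix.diagonal (fun i => (γ i : ℂ)) * Wᴴ)).re) ∧
    (Matrix.trace ((Matrix.diagonal (fun i => (d i : ℂ)))⁻¹ *
        (1 : Matrix (Fin n) (Fin n) ℂ) *
        Matrix.diagonal (fun i => (γ i : ℂ)) * (1 : Matrix (Fin n) (Fin n) ℂ)ᴴ)).re =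
      ∑ i, γ i / d i := by
  have hdne : ∀ i, (d i : ℂ) ≠ 0 := fun i =>
    Complex.ofReal_ne_zero.2 (hdpos i).ne'
  have hdinv : (Matrix.diagonal (fun i => (d i : ℂ)))⁻¹ =
      Matrix.diagonal (fun i => ((d i : ℂ))⁻¹) := by
    apply Matrix.inv_eq_left_inv
    rw [Matrix.diagonal_mul_diagonal,
      show (fun i => ((d i : ℂ))⁻¹ * (d i : ℂ)) = fun _ => (1 : ℂ) from
        funext fun i => inv_mul_cancel₀ (hdne i), Matrix.diagonal_one]
  have htr : ∀ W : Matrix (Fin n) (Fin n) ℂ,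
      Matrix.trace ((Matrix.diagonal (fun i => (d i : ℂ)))⁻¹ * W *
          Matrix.diagonal (fun i => (γ i : ℂ)) * Wᴴ) =
        ∑ i, ∑ j, (((d i)⁻¹ * γ j * Complex.normSq (W i j) : ℝ) : ℂ) := by
    intro W
    rw [hdinv]
    have hA : ∀ i j, (Matrix.diagonal (fun i => ((d i : ℂ))⁻¹) * W *
        Matrix.diagonal (fun i => (γ i : ℂ))) i j = (d i : ℂ)⁻¹ * W i j * γ j := by
      intro i j
      rw [Matrix.mul_diagonal, Matrix.diagonal_mul]
    simp only [Matrix.trace, Matrix.diag, Matrix.mul_apply, Matrix.conjTranspose_apply, hA]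
    refine Finset.sum_congr rfl fun i _ => Finset.sum_congr rfl fun j _ => ?_
    have h1 : (d i : ℂ)⁻¹ * W i j * (γ j : ℂ) * star (W i j)
        = (d i : ℂ)⁻¹ * (γ j : ℂ) * (W i j * star (W i j)) := by ring
    have h2 : W i j * star (W i j) = (Complex.normSq (W i j) : ℂ) := Complex.mul_conj _
    rw [h1, h2]
    push_cast
    ring
  constructor
  · intro W hW
    rw [htr W, Complex.re_sum]
    simp only [Complex.re_sum, Complex.ofReal_re]
    have hc : Antitone (fun i => (d i)⁻¹) :=
      fun i j h => inv_anti₀ (hdpos i) (hd h)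
    have h1 : W * Wᴴ = 1 := by
      have := (Matrix.mem_unitaryGroup_iff).1 hW
      rwa [Matrix.star_eq_conjTranspose] at this
    have h2 : Wᴴ * W = 1 := by
      have := (Matrix.mem_unitaryGroup_iff').1 hW
      rwa [Matrix.star_eq_conjTranspose] at this
    have hrow : ∀ i, ∑ j, Complex.normSq (W i j) = 1 := by
      intro i
      have := congrFun (congrFun h1 i) i
      simp only [Matrix.mul_apply, Matrix.conjTranspose_apply, Matrix.one_apply_eq] at this
      have : ((∑ j, Complex.normSq (W i j) : ℝ) : ℂ) = 1 := by
        push_cast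
        rw [← this]
        refine Finset.sum_congr rfl fun j _ => ?_
        rw [← Complex.mul_conj]
        rfl
      exact_mod_cast this
    have hcol : ∀ j, ∑ i, Complex.normSq (W i j) = 1 := by
      intro j
      have := congrFun (congrFun h2 j) j
      simp only [Matrix.mul_apply, Matrix.conjTranspose_apply, Matrix.one_apply_eq] at this
      have : ((∑ i, Complex.normSq (W i j) : ℝ) : ℂ) = 1 := by
        push_cast
        rw [← this]
        refine Finset.sum_congr rfl fun i _ => ?_
        rw [← Complex.mul_conj]
        ring_nf
        rfl
      exact_mod_cast this
    have hP : Matrix.of (fun i j => Complex.normSq (W i j)) ∈ doublyStochastic ℝ (Fin n) := by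
      rw [mem_doublyStochastic_iff_sum]
      exact ⟨fun i j => Complex.normSq_nonneg _, hrow, hcol⟩
    have := key_ds (fun i => (d i)⁻¹) γ hc hγ _ hP
    calc ∑ i, γ i / d i = ∑ i, (d i)⁻¹ * γ i := by
          refine Finset.sum_congr rfl fun i _ => ?_
          rw [div_eq_inv_mul, mul_comm]
      _ ≤ _ := this
  · rw [htr 1, Complex.re_sum]
    simp only [Complex.re_sum, Complex.ofReal_re]
    refine Finset.sum_congr rfl fun i _ => ?_
    rw [Finset.sum_eq_single i]
    · simp [Matrix.one_apply_eq, div_eq_inv_mul, mul_comm]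
    · intro j _ hj
      simp [Matrix.one_apply_ne' hj]
    · simp
end

section
/- Let n be a positive integer. Let T = U diag(d₁, …, d_n) Uᴴ be an n×n Hermitian positive definite matrix, where U is unitary and 0 < d₁ ≤ d₂ ≤ … ≤ d_n. Let Q = U_q diag(γ₁, …, γ_n) U_qᴴ be an n×n Hermitian positive semidefinite matrix, where U_q is unitary and 0 ≤ γ₁ ≤ γ₂ ≤ … ≤ γ_n. Then every n×n complex matrix B satisfying Bᴴ T B = Q has transmit power Re tr(B Bᴴ) ≥ Σ_{i=1}^n γ_i / d_i. -/
open Matrix Finset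

private lemma kyfan_claim (n : ℕ) (γ : Fin n → ℝ) (hγ : Monotone γ) (hγnonneg : ∀ i, 0 ≤ γ i)
    (t : Fin n → Fin n → ℝ) (ht : ∀ i j, 0 ≤ t i j)
    (hcol : ∀ j, ∑ i, t i j = γ j)
    (hrow : ∀ i, ∑ j, t i j * (if 0 < γ j then (γ j)⁻¹ else 0) ≤ 1)
    (k : Fin n) :
    ∑ j ∈ univ.filter (· ≤ k), γ j ≤ ∑ i ∈ univ.filter (· ≤ k), ∑ j, t i j := by
  set gp : Fin n → ℝ := fun j => if 0 < γ j then (γ j)⁻¹ else 0 with hgp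
  have hgp0 : ∀ j, 0 ≤ gp j := by
    intro j; simp only [hgp]; split <;> positivity
  have hgg : ∀ j, gp j * γ j = if 0 < γ j then 1 else 0 := by
    intro j; simp only [hgp]; split
    · rename_i h; field_simp
    · simp
  have hγ0 : ∀ j, ¬ 0 < γ j → γ j = 0 := fun j h => le_antisymm (not_lt.1 h) (hγnonneg j)
  set Fk := univ.filter (· ≤ k) with hFk
  set c : Fin n → ℝ := fun j => gp j * ∑ i ∈ Fk, t i j with hc
  have hc0 : ∀ j, 0 ≤ c j := fun j =>
    mul_nonneg (hgp0 j) (Finset.sum_nonneg fun i _ => ht i j)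
  have hsumle : ∀ j, ∑ i ∈ Fk, t i j ≤ γ j := by
    intro j
    rw [← hcol j]
    exact Finset.sum_le_sum_of_subset_of_nonneg (subset_univ _) (fun i _ _ => ht i j)
  have hc1 : ∀ j, c j ≤ 1 := by
    intro j
    calc c j ≤ gp j * γ j := mul_le_mul_of_nonneg_left (hsumle j) (hgp0 j)
    _ ≤ 1 := by rw [hgg]; split <;> norm_num
  -- Step A
  have stepA : ∑ j, γ j * c j ≤ ∑ i ∈ Fk, ∑ j, t i j := by
    have : ∑ j, γ j * c j = ∑ i ∈ Fk, ∑ j, t i j * (gp j * γ j) := by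
      rw [Finset.sum_comm]
      refine Finset.sum_congr rfl fun j _ => ?_
      simp only [hc, Finset.mul_sum]
      refine Finset.sum_congr rfl fun i _ => by ring
    rw [this]
    refine Finset.sum_le_sum fun i _ => Finset.sum_le_sum fun j _ => ?_
    calc t i j * (gp j * γ j) ≤ t i j * 1 := by
          refine mul_le_mul_of_nonneg_left ?_ (ht i j)
          rw [hgg]; split <;> norm_num
    _ = t i j := mul_one _
  -- Step B
  have g0 : 0 ≤ γ k := hγnonneg k
  have stepB : ∑ j ∈ Fk, γ j ≤ ∑ j, γ j * c j := by
    have key : γ k * (∑ j, c j - ∑ j ∈ Fk, gp j * γ j) ≤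
        ∑ j, γ j * c j - ∑ j ∈ Fk, γ j := by
      have expand : ∑ j, γ j * c j - ∑ j ∈ Fk, γ j
          = ∑ j, (γ j * c j - if j ∈ Fk then γ j else 0) := by
        rw [Finset.sum_sub_distrib, Finset.sum_ite_mem, Finset.univ_inter]
      have expand2 : γ k * (∑ j, c j - ∑ j ∈ Fk, gp j * γ j)
          = ∑ j, γ k * (c j - if j ∈ Fk then gp j * γ j else 0) := by
        rw [← Finset.mul_sum]
        congr 1
        rw [Finset.sum_sub_distrib, Finset.sum_ite_mem, Finset.univ_inter]
      rw [expand, expand2]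
      refine Finset.sum_le_sum fun j _ => ?_
      by_cases hj : j ∈ Fk
      · simp only [hj, if_pos]
        have hjk : γ j ≤ γ k := hγ (by simpa [hFk] using hj)
        by_cases hpos : 0 < γ j
        · have : gp j * γ j = 1 := by rw [hgg]; simp [hpos]
          rw [this]
          nlinarith [hc1 j, hc0 j]
        · have h0 : γ j = 0 := hγ0 j hpos
          have hcj : c j = 0 := by
            have : ∑ i ∈ Fk, t i j = 0 := le_antisymm (h0 ▸ hsumle j)
              (Finset.sum_nonneg fun i _ => ht i j)
            simp [hc, this]
          simp [h0, hcj]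
      · simp only [hj, if_neg, not_false_iff, sub_zero]
        have hjk : γ k ≤ γ j := by
          apply hγ
          have : ¬ j ≤ k := by simpa [hFk] using hj
          exact le_of_lt (not_le.1 this)
        exact mul_le_mul_of_nonneg_right hjk (hc0 j)
    have pos : 0 ≤ γ k * (∑ j, c j - ∑ j ∈ Fk, gp j * γ j) := by
      rcases eq_or_lt_of_le g0 with hg | hg
      · rw [← hg]; simp
      · apply mul_nonneg (le_of_lt hg)
        rw [sub_nonneg]
        have hcsum : ∑ j, gp j * γ j - (↑(univ.filter (¬ · ≤ k)).card : ℝ) ≤ ∑ j, c j := by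
          have e1 : ∑ j, c j = ∑ j, gp j * γ j - ∑ i ∈ univ.filter (¬ · ≤ k), ∑ j, t i j * gp j := by
            have : ∀ j, c j = gp j * γ j - gp j * ∑ i ∈ univ.filter (¬ · ≤ k), t i j := by
              intro j
              have : ∑ i ∈ Fk, t i j + ∑ i ∈ univ.filter (¬ · ≤ k), t i j = γ j := by
                rw [hFk, Finset.sum_filter_add_sum_filter_not]; exact hcol j
              simp only [hc]
              rw [mul_comm (gp j) (γ j), ← this]; ring
            rw [Finset.sum_congr rfl fun j _ => this j, Finset.sum_sub_distrib]
            congr 1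
            rw [Finset.sum_comm]
            refine Finset.sum_congr rfl fun i _ => ?_
            rw [Finset.mul_sum]
            exact Finset.sum_congr rfl fun j _ => by ring
          rw [e1]
          have : ∑ i ∈ univ.filter (¬ · ≤ k), ∑ j, t i j * gp j ≤ (↑(univ.filter (¬ · ≤ k)).card : ℝ) := by
            calc ∑ i ∈ univ.filter (¬ · ≤ k), ∑ j, t i j * gp j
                ≤ ∑ i ∈ univ.filter (¬ · ≤ k), 1 := Finset.sum_le_sum fun i _ => hrow i
            _ = _ := by simp
          linarith
        have hge : (↑(univ.filter (¬ · ≤ k)).card : ℝ) ≤ ∑ j ∈ univ.filter (¬ · ≤ k), gp j * γ j := by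
          have : ∀ j ∈ univ.filter (¬ · ≤ k), gp j * γ j = 1 := by
            intro j hj
            have : ¬ j ≤ k := by simpa using hj
            have : 0 < γ j := lt_of_lt_of_le hg (hγ (le_of_lt (not_le.1 this)))
            rw [hgg]; simp [this]
          rw [Finset.sum_congr rfl this]; simp
        have hsplit : ∑ j, gp j * γ j = ∑ j ∈ Fk, gp j * γ j + ∑ j ∈ univ.filter (¬ · ≤ k), gp j * γ j := by
          rw [hFk, Finset.sum_filter_add_sum_filter_not]
        linarith
    linarith
  linarith

private lemma re_sq_le_normSq (z : ℂ) : z.re ^ 2 ≤ Complex.normSq z := by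
  rw [Complex.normSq_apply, sq]
  nlinarith [mul_self_nonneg z.im]

private lemma sq_le_self_imp_le_one {S : ℝ} (h1 : S ^ 2 ≤ S) (h2 : 0 ≤ S) : S ≤ 1 := by
  nlinarith

private lemma abel_core (n : ℕ) (d γ R : Fin n → ℝ)
    (hdpos : ∀ i, 0 < d i) (hd : Monotone d)
    (hclaim : ∀ k : Fin n, ∑ j ∈ univ.filter (· ≤ k), γ j ≤ ∑ i ∈ univ.filter (· ≤ k), R i) :
    ∑ j, γ j / d j ≤ ∑ i, R i / d i := by
  classical
  set F : ℕ → ℝ := fun m => if h : m < n then (d ⟨m, h⟩)⁻¹ else 0 with hF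
  have hε0 : ∀ k : Fin n, 0 ≤ F k - F ((k : ℕ) + 1) := by
    intro k
    rw [sub_nonneg]
    simp only [hF]
    rw [dif_pos k.isLt]
    split
    · rename_i h
      exact inv_anti₀ (hdpos _) (hd (by simp [Fin.le_def]))
    · exact inv_nonneg.2 (hdpos _).le
  have htel : ∀ i : Fin n, (d i)⁻¹ = ∑ k ∈ univ.filter (i ≤ ·), (F k - F ((k:ℕ) + 1)) := by
    intro i
    have h1 : ∑ k ∈ univ.filter (i ≤ ·), (F k - F ((k:ℕ)+1))
        = ∑ m ∈ Finset.range n, (if (i:ℕ) ≤ m then F m - F (m + 1) else 0) := by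
      rw [Finset.sum_filter]
      simp only [Fin.le_def]
      exact Fin.sum_univ_eq_sum_range (fun m => if (i:ℕ) ≤ m then F m - F (m+1) else 0) n
    have h2 : ∑ m ∈ Finset.range n, (if (i:ℕ) ≤ m then F m - F (m + 1) else 0)
        = ∑ m ∈ Finset.Ico (i:ℕ) n, (F m - F (m + 1)) := by
      rw [Finset.range_eq_Ico, ← Finset.sum_filter]
      congr 1
      ext m
      simp [Finset.mem_filter, Finset.mem_Ico, and_comm]
    have h3 : ∑ m ∈ Finset.Ico (i:ℕ) n, (F m - F (m + 1)) = F i - F n := by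
      rw [Finset.sum_Ico_eq_sum_range]
      have := Finset.sum_range_sub' (fun l => F ((i:ℕ) + l)) (n - (i:ℕ))
      simp only [add_zero] at this
      calc ∑ m ∈ Finset.range (n - (i:ℕ)), (F ((i:ℕ) + m) - F ((i:ℕ) + m + 1))
          = ∑ m ∈ Finset.range (n - (i:ℕ)), ((fun l => F ((i:ℕ) + l)) m - (fun l => F ((i:ℕ) + l)) (m+1)) := by
            refine Finset.sum_congr rfl fun m _ => ?_
            simp only []
            ring_nf
      _ = F (i:ℕ) - F ((i:ℕ) + (n - (i:ℕ))) := this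
      _ = F i - F n := by rw [Nat.add_sub_cancel' (le_of_lt i.isLt)]
    rw [h1, h2, h3]
    simp [hF, i.isLt]
  have expand : ∀ x : Fin n → ℝ, ∑ i, x i / d i
      = ∑ k : Fin n, (F k - F ((k:ℕ)+1)) * ∑ i ∈ univ.filter (· ≤ k), x i := by
    intro x
    calc ∑ i, x i / d i
        = ∑ i : Fin n, ∑ k : Fin n, (if i ≤ k then (F k - F ((k:ℕ)+1)) * x i else 0) := by
          refine Finset.sum_congr rfl fun i _ => ?_
          rw [div_eq_mul_inv, htel i, Finset.sum_filter, Finset.mul_sum]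
          refine Finset.sum_congr rfl fun k _ => ?_
          split <;> ring
    _ = ∑ k : Fin n, ∑ i : Fin n, (if i ≤ k then (F k - F ((k:ℕ)+1)) * x i else 0) :=
          Finset.sum_comm
    _ = _ := by
          refine Finset.sum_congr rfl fun k _ => ?_
          rw [Finset.mul_sum, Finset.sum_filter]
  rw [expand γ, expand R]
  exact Finset.sum_le_sum fun k _ =>
    mul_le_mul_of_nonneg_left (hclaim k) (hε0 k)

/-- minimum transmit power of a precoder achieving `Bᴴ T B = Q`. -/
theorem statement10 (n : ℕ) (hn : 0 < n)
    (d γ : Fin n → ℝ) (hd : Monotone d) (hdpos : ∀ i, 0 < d i)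
    (hγ : Monotone γ) (hγnonneg : ∀ i, 0 ≤ γ i)
    (U Uq : Matrix (Fin n) (Fin n) ℂ)
    (hU : U ∈ Matrix.unitaryGroup (Fin n) ℂ) (hUq : Uq ∈ Matrix.unitaryGroup (Fin n) ℂ)
    (B : Matrix (Fin n) (Fin n) ℂ)
    (hB : Bᴴ * (U * Matrix.diagonal (fun i => (d i : ℂ)) * Uᴴ) * B =
      Uq * Matrix.diagonal (fun i => (γ i : ℂ)) * Uqᴴ) :
    (∑ i, γ i / d i) ≤ (Matrix.trace (B * Bᴴ)).re := by
  have hU2 : U * Uᴴ = 1 := by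
    have := hU.2; rwa [Matrix.star_eq_conjTranspose] at this
  have hUq1 : Uqᴴ * Uq = 1 := by
    have := hUq.1; rwa [Matrix.star_eq_conjTranspose] at this
  have hUq2 : Uq * Uqᴴ = 1 := by
    have := hUq.2; rwa [Matrix.star_eq_conjTranspose] at this
  set A : Matrix (Fin n) (Fin n) ℂ := Uᴴ * B * Uq with hA
  have hAH : Aᴴ = Uqᴴ * Bᴴ * U := by
    simp [hA, Matrix.conjTranspose_mul, Matrix.mul_assoc]
  have key : Aᴴ * Matrix.diagonal (fun i => (d i : ℂ)) * A
      = Matrix.diagonal (fun i => (γ i : ℂ)) := by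
    rw [hAH, hA]
    calc Uqᴴ * Bᴴ * U * Matrix.diagonal (fun i => (d i : ℂ)) * (Uᴴ * B * Uq)
        = Uqᴴ * (Bᴴ * (U * Matrix.diagonal (fun i => (d i : ℂ)) * Uᴴ) * B) * Uq := by
          simp only [Matrix.mul_assoc]
    _ = Uqᴴ * (Uq * Matrix.diagonal (fun i => (γ i : ℂ)) * Uqᴴ) * Uq := by rw [hB]
    _ = Matrix.diagonal (fun i => (γ i : ℂ)) := by
          calc Uqᴴ * (Uq * Matrix.diagonal (fun i => (γ i : ℂ)) * Uqᴴ) * Uq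
              = (Uqᴴ * Uq) * Matrix.diagonal (fun i => (γ i : ℂ)) * (Uqᴴ * Uq) := by
                simp only [Matrix.mul_assoc]
          _ = _ := by rw [hUq1]; simp
  have hAAH : A * Aᴴ = Uᴴ * ((B * Bᴴ) * U) := by
    rw [hA, hAH]
    calc Uᴴ * B * Uq * (Uqᴴ * Bᴴ * U)
        = Uᴴ * (B * ((Uq * Uqᴴ) * (Bᴴ * U))) := by simp only [Matrix.mul_assoc]
    _ = Uᴴ * ((B * Bᴴ) * U) := by rw [hUq2]; simp only [Matrix.one_mul, Matrix.mul_assoc]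
  have htr : Matrix.trace (B * Bᴴ) = Matrix.trace (A * Aᴴ) := by
    rw [hAAH, Matrix.trace_mul_comm Uᴴ (B * Bᴴ * U)]
    calc Matrix.trace (B * Bᴴ)
        = Matrix.trace (B * Bᴴ * (U * Uᴴ)) := by rw [hU2]; simp
    _ = Matrix.trace (B * Bᴴ * U * Uᴴ) := by simp only [Matrix.mul_assoc]
  -- the transfer coefficients
  set t : Fin n → Fin n → ℝ := fun i j => d i * Complex.normSq (A i j) with htdef
  have ht : ∀ i j, 0 ≤ t i j := fun i j => mul_nonneg (hdpos i).le (Complex.normSq_nonneg _)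
  have hcol : ∀ j, ∑ i, t i j = γ j := by
    intro j
    have h := congrFun (congrFun key j) j
    rw [Matrix.mul_apply] at h
    have hL : ∀ i, (Aᴴ * Matrix.diagonal (fun i => (d i : ℂ))) j i * A i j
        = ((t i j : ℝ) : ℂ) := by
      intro i
      rw [Matrix.mul_diagonal, Matrix.conjTranspose_apply]
      calc (starRingEnd ℂ) (A i j) * ((d i : ℂ)) * A i j
          = ((d i : ℂ)) * (A i j * (starRingEnd ℂ) (A i j)) := by ring
      _ = ((d i : ℂ)) * ((Complex.normSq (A i j) : ℝ) : ℂ) := by rw [Complex.mul_conj]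
      _ = ((t i j : ℝ) : ℂ) := by rw [htdef]; push_cast; ring
    rw [Finset.sum_congr rfl fun i _ => hL i] at h
    rw [Matrix.diagonal_apply_eq, ← Complex.ofReal_sum] at h
    exact_mod_cast h
  -- the projection argument for row sums
  set gp : Fin n → ℝ := fun j => if 0 < γ j then (γ j)⁻¹ else 0 with hgpdef
  have hgp0 : ∀ j, 0 ≤ gp j := by
    intro j
    simp only [hgpdef]
    split
    · exact inv_nonneg.2 (hγnonneg _)
    · exact le_refl 0
  set E : Matrix (Fin n) (Fin n) ℂ := Matrix.diagonal (fun i => ((Real.sqrt (d i) : ℝ) : ℂ)) with hE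
  set Gp : Matrix (Fin n) (Fin n) ℂ := Matrix.diagonal (fun j => ((gp j : ℝ) : ℂ)) with hGp
  set P : Matrix (Fin n) (Fin n) ℂ := E * (A * (Gp * (Aᴴ * E))) with hP
  have hEE : ∀ X : Matrix (Fin n) (Fin n) ℂ,
      E * (E * X) = Matrix.diagonal (fun i => (d i : ℂ)) * X := by
    intro X
    rw [← Matrix.mul_assoc, hE, Matrix.diagonal_mul_diagonal]
    have e : ∀ i, ((Real.sqrt (d i) : ℝ) : ℂ) * ((Real.sqrt (d i) : ℝ) : ℂ) = ((d i : ℝ) : ℂ) :=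
      fun i => by rw [← Complex.ofReal_mul, Real.mul_self_sqrt (hdpos i).le]
    simp only [e]
  have hkey' : ∀ Y : Matrix (Fin n) (Fin n) ℂ,
      Aᴴ * (Matrix.diagonal (fun i => (d i : ℂ)) * (A * Y))
        = Matrix.diagonal (fun i => (γ i : ℂ)) * Y := by
    intro Y
    simp only [← Matrix.mul_assoc]
    rw [key]
  have hGG : ∀ Z : Matrix (Fin n) (Fin n) ℂ,
      Gp * (Matrix.diagonal (fun i => (γ i : ℂ)) * (Gp * Z)) = Gp * Z := by
    intro Z
    simp only [← Matrix.mul_assoc]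
    congr 1
    rw [hGp, Matrix.diagonal_mul_diagonal, Matrix.diagonal_mul_diagonal]
    have e : ∀ j, ((gp j : ℝ) : ℂ) * ((γ j : ℝ) : ℂ) * ((gp j : ℝ) : ℂ) = ((gp j : ℝ) : ℂ) := by
      intro j
      have hr : gp j * γ j * gp j = gp j := by
        by_cases h : 0 < γ j
        · simp only [hgpdef, if_pos h]
          field_simp
        · have h0 : γ j = 0 := le_antisymm (not_lt.1 h) (hγnonneg j)
          simp [hgpdef, h, h0]
      calc ((gp j : ℝ) : ℂ) * ((γ j : ℝ) : ℂ) * ((gp j : ℝ) : ℂ)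
          = ((gp j * γ j * gp j : ℝ) : ℂ) := by push_cast; ring
      _ = _ := by rw [hr]
    simp only [e]
  have hP2 : P * P = P := by
    calc P * P = E * (A * (Gp * (Aᴴ * (E * (E * (A * (Gp * (Aᴴ * E)))))))) := by
          simp only [hP, Matrix.mul_assoc]
    _ = E * (A * (Gp * (Aᴴ * (Matrix.diagonal (fun i => (d i : ℂ)) * (A * (Gp * (Aᴴ * E))))))) := by
          rw [hEE]
    _ = E * (A * (Gp * (Matrix.diagonal (fun i => (γ i : ℂ)) * (Gp * (Aᴴ * E))))) := by
          rw [hkey']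
    _ = E * (A * (Gp * (Aᴴ * E))) := by rw [hGG]
  have hermE : Eᴴ = E := by
    rw [hE, Matrix.diagonal_conjTranspose]
    have : (star fun i => ((Real.sqrt (d i) : ℝ) : ℂ)) = fun i => ((Real.sqrt (d i) : ℝ) : ℂ) :=
      funext fun i => by simp [Complex.star_def, Complex.conj_ofReal]
    rw [this]
  have hermGp : Gpᴴ = Gp := by
    rw [hGp, Matrix.diagonal_conjTranspose]
    have : (star fun j => ((gp j : ℝ) : ℂ)) = fun j => ((gp j : ℝ) : ℂ) :=
      funext fun j => by simp [Complex.star_def, Complex.conj_ofReal]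
    rw [this]
  have hPH : Pᴴ = P := by
    simp only [hP, Matrix.conjTranspose_mul, Matrix.conjTranspose_conjTranspose,
      hermE, hermGp, Matrix.mul_assoc]
  have hPdiag : ∀ i, P i i = ((∑ j, t i j * gp j : ℝ) : ℂ) := by
    intro i
    have hPform : P = E * (A * Gp * Aᴴ) * E := by
      simp only [hP, Matrix.mul_assoc]
    rw [hPform, hE]
    rw [Matrix.mul_diagonal, Matrix.diagonal_mul]
    have hmid : (A * Gp * Aᴴ) i i = ((∑ j, gp j * Complex.normSq (A i j) : ℝ) : ℂ) := by
      rw [hGp, Matrix.mul_apply, Complex.ofReal_sum]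
      refine Finset.sum_congr rfl fun j _ => ?_
      rw [Matrix.mul_diagonal, Matrix.conjTranspose_apply]
      calc A i j * ((gp j : ℝ) : ℂ) * (starRingEnd ℂ) (A i j)
          = ((gp j : ℝ) : ℂ) * (A i j * (starRingEnd ℂ) (A i j)) := by ring
      _ = _ := by rw [Complex.mul_conj]; push_cast; ring
    rw [hmid]
    have hreal : Real.sqrt (d i) * (∑ j, gp j * Complex.normSq (A i j)) * Real.sqrt (d i)
        = ∑ j, t i j * gp j := by
      have hs : Real.sqrt (d i) * Real.sqrt (d i) = d i := Real.mul_self_sqrt (hdpos i).le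
      calc Real.sqrt (d i) * (∑ j, gp j * Complex.normSq (A i j)) * Real.sqrt (d i)
          = (Real.sqrt (d i) * Real.sqrt (d i)) * ∑ j, gp j * Complex.normSq (A i j) := by ring
      _ = d i * ∑ j, gp j * Complex.normSq (A i j) := by rw [hs]
      _ = ∑ j, t i j * gp j := by
            rw [Finset.mul_sum]
            exact Finset.sum_congr rfl fun j _ => by simp only [htdef]; ring
    exact_mod_cast congrArg (fun r : ℝ => (r : ℂ)) hreal
  -- row sums are at most 1 (Bessel via the projection P)
  have hrow : ∀ i, ∑ j, t i j * (if 0 < γ j then (γ j)⁻¹ else 0) ≤ 1 := by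
    intro i
    have hPPH : P * Pᴴ = P := by rw [hPH, hP2]
    have h := congrFun (congrFun hPPH i) i
    rw [Matrix.mul_apply] at h
    have hterm : ∀ j, P i j * Pᴴ j i = ((Complex.normSq (P i j) : ℝ) : ℂ) := by
      intro j
      rw [Matrix.conjTranspose_apply, Complex.star_def, Complex.mul_conj]
    rw [Finset.sum_congr rfl fun j _ => hterm j] at h
    rw [← Complex.ofReal_sum, hPdiag i] at h
    have hsum : ∑ j, Complex.normSq (P i j) = ∑ j, t i j * gp j := by exact_mod_cast h
    have hle : Complex.normSq (P i i) ≤ ∑ j, Complex.normSq (P i j) :=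
      Finset.single_le_sum (fun j _ => Complex.normSq_nonneg _) (Finset.mem_univ i)
    have hsq : ((P i i).re) ^ 2 ≤ Complex.normSq (P i i) := re_sq_le_normSq _
    have hre : (P i i).re = ∑ j, t i j * gp j := by rw [hPdiag i, Complex.ofReal_re]
    have hx : (∑ j, t i j * gp j) ^ 2 ≤ ∑ j, t i j * gp j := by
      calc (∑ j, t i j * gp j) ^ 2 = ((P i i).re) ^ 2 := by rw [hre]
      _ ≤ Complex.normSq (P i i) := hsq
      _ ≤ ∑ j, Complex.normSq (P i j) := hle
      _ = ∑ j, t i j * gp j := hsum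
    have hxnn : 0 ≤ ∑ j, t i j * gp j :=
      Finset.sum_nonneg fun j _ => mul_nonneg (ht i j) (hgp0 j)
    have : ∑ j, t i j * gp j ≤ 1 := sq_le_self_imp_le_one hx hxnn
    simpa only [hgpdef] using this
  -- put everything together
  have main : ∑ j, γ j / d j ≤ ∑ i, (∑ j, t i j) / d i :=
    abel_core n d γ (fun i => ∑ j, t i j) hdpos hd
      (fun k => kyfan_claim n γ hγ hγnonneg t ht hcol hrow k)
  have hR : ∀ i, (∑ j, t i j) / d i = ∑ j, Complex.normSq (A i j) := by
    intro i
    have : ∑ j, t i j = d i * ∑ j, Complex.normSq (A i j) := by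
      rw [Finset.mul_sum]
    rw [this]
    exact mul_div_cancel_left₀ _ (hdpos i).ne'
  have htrace : (Matrix.trace (B * Bᴴ)).re = ∑ i, ∑ j, Complex.normSq (A i j) := by
    rw [htr]
    have : Matrix.trace (A * Aᴴ) = ∑ i, ∑ j, ((Complex.normSq (A i j) : ℝ) : ℂ) := by
      rw [Matrix.trace]
      refine Finset.sum_congr rfl fun i _ => ?_
      rw [Matrix.diag_apply, Matrix.mul_apply]
      refine Finset.sum_congr rfl fun j _ => ?_
      rw [Matrix.conjTranspose_apply, Complex.star_def, Complex.mul_conj]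
    rw [this]
    rw [Complex.re_sum]
    refine Finset.sum_congr rfl fun i _ => ?_
    rw [Complex.re_sum]
    simp
  rw [htrace]
  calc ∑ i, γ i / d i ≤ ∑ i, (∑ j, t i j) / d i := main
  _ = ∑ i, ∑ j, Complex.normSq (A i j) := Finset.sum_congr rfl fun i _ => hR i
end

section
/- Replica moment identity: let N, n be positive integers, let r ≥ 0 be an integer, let A be an N×n complex matrix, let S be a nonempty finite set of vectors in ℂ^n, and let p : S → [0,1] be a probability mass function on S (Σ_{s∈S} p(s) = 1). Define Z(y) = Σ_{s∈S} p(s) · exp(−‖y − A s‖²) for y ∈ ℂ^N. Then ∫ Dy Z(y)^{r+1} = Σ_{(s₀,…,s_r) ∈ S^{r+1}} (∏_{α=0}^{r} p(s_α)) · (r+1)^{−N} · exp(−Re tr(M Σ Mᴴ)), where M is the N×(r+1) matrix whose α-th column is A s_α and Σ = I_{r+1} − (1/(r+1))·𝟙𝟙ᴴ. -/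
/-!
Expanding `Z(y)^(r+1)` turns the left side into a sum over replica tuples `t` of Gaussian
integrals that factor over the coordinates of `y`. In each coordinate, completing the square
around the replica mean `(r+1)⁻¹ ∑ₐ (A tₐ)ᵢ` leaves a Gaussian of width `(r+1)⁻¹`, contributing
`π / (r+1)`, times `exp (-(∑ₐ |(A tₐ)ᵢ|² - (r+1)⁻¹ |∑ₐ (A tₐ)ᵢ|²))`; summed over `i`, that
exponent is `Re tr (M Σ Mᴴ)`.
-/

open MeasureTheory Matrix

lemma sum_mul_exp_neg_pow {σ : Type*} (S : Finset σ) (p f : σ → ℝ) (k : ℕ) :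
    (∑ s ∈ S, p s * Real.exp (-f s)) ^ k =
      ∑ t ∈ Fintype.piFinset fun _ : Fin k => S, (∏ j, p (t j)) * Real.exp (-∑ j, f (t j)) := by
  rw [← Fin.prod_const, Finset.prod_univ_sum]
  simp_rw [Finset.prod_mul_distrib, ← Real.exp_sum, Finset.sum_neg_distrib]

section Replicas

variable {ι : Type*} [Fintype ι]

lemma sum_norm_sub_sq_eq_card_mul_norm_sub_mean_sq_add [Nonempty ι] (a : ι → ℂ) (z : ℂ) :
    ∑ α, ‖z - a α‖ ^ 2 =
      Fintype.card ι * ‖z - (Fintype.card ι : ℂ)⁻¹ * ∑ α, a α‖ ^ 2 +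
        (∑ α, ‖a α‖ ^ 2 - (Fintype.card ι : ℝ)⁻¹ * ‖∑ α, a α‖ ^ 2) := by
  have hk : (Fintype.card ι : ℂ) ≠ 0 := Nat.cast_ne_zero.2 Fintype.card_ne_zero
  apply Complex.ofReal_injective
  push_cast
  simp only [← Complex.mul_conj', map_sub, map_sum, map_mul, map_inv₀, Complex.conj_natCast,
    sub_mul, mul_sub, Finset.sum_sub_distrib, Finset.sum_const, Finset.card_univ, nsmul_eq_mul,
    ← Finset.mul_sum, ← Finset.sum_mul]
  field_simp
  ring

lemma integral_exp_neg_mul_norm_sq_complex {c : ℝ} (hc : 0 < c) :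
    ∫ z : ℂ, Real.exp (-c * ‖z‖ ^ 2) = Real.pi / c := by
  rw [GaussianFourier.integral_rexp_neg_mul_sq_norm hc, Complex.finrank_real_complex]
  norm_num

lemma integral_exp_neg_sum_norm_sub_sq [Nonempty ι] (a : ι → ℂ) :
    ∫ z : ℂ, Real.exp (-∑ α, ‖z - a α‖ ^ 2) =
      Real.pi / Fintype.card ι *
        Real.exp (-(∑ α, ‖a α‖ ^ 2 - (Fintype.card ι : ℝ)⁻¹ * ‖∑ α, a α‖ ^ 2)) := by
  simp_rw [sum_norm_sub_sq_eq_card_mul_norm_sub_mean_sq_add a, neg_add, Real.exp_add,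
    integral_mul_const, ← neg_mul]
  rw [integral_sub_right_eq_self (fun z : ℂ => Real.exp (-(Fintype.card ι : ℝ) * ‖z‖ ^ 2)),
    integral_exp_neg_mul_norm_sq_complex (by positivity)]

lemma integral_exp_neg_sum_sum_norm_sub_sq {m : Type*} [Fintype m] [Nonempty ι]
    (a : ι → m → ℂ) :
    ∫ y : m → ℂ, Real.exp (-∑ α, ∑ i, ‖y i - a α i‖ ^ 2) =
      (Real.pi / Fintype.card ι) ^ Fintype.card m *
        Real.exp (-∑ i, (∑ α, ‖a α i‖ ^ 2 - (Fintype.card ι : ℝ)⁻¹ * ‖∑ α, a α i‖ ^ 2)) := by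
  have h_prod (y : m → ℂ) : Real.exp (-∑ α, ∑ i, ‖y i - a α i‖ ^ 2) =
      ∏ i, Real.exp (-∑ α, ‖y i - a α i‖ ^ 2) := by
    rw [Finset.sum_comm, ← Real.exp_sum, Finset.sum_neg_distrib]
  simp_rw [h_prod]
  rw [integral_fintype_prod_volume_eq_prod (fun i z => Real.exp (-∑ α, ‖z - a α i‖ ^ 2))]
  simp_rw [integral_exp_neg_sum_norm_sub_sq, Finset.prod_mul_distrib, Finset.prod_const,
    Finset.card_univ, ← Real.exp_sum, Finset.sum_neg_distrib]

lemma re_trace_mul_one_sub_smul_ones_mul_conjTranspose {m : Type*} [Fintype m] [DecidableEq ι]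
    (M : Matrix m ι ℂ) (c : ℝ) :
    (M * (1 - (c : ℂ) • of fun _ _ => 1 : Matrix ι ι ℂ) * Mᴴ).trace.re =
      ∑ i, (∑ α, ‖M i α‖ ^ 2 - c * ‖∑ α, M i α‖ ^ 2) := by
  have h_entry (i : m) (β : ι) :
      (M * (1 - (c : ℂ) • of fun _ _ => 1 : Matrix ι ι ℂ)) i β = M i β - c * ∑ α, M i α := by
    rw [Matrix.mul_sub, Matrix.mul_one, Matrix.mul_smul, Matrix.sub_apply, Matrix.smul_apply,
      mul_apply]
    simp only [of_apply, mul_one, smul_eq_mul]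
  have h_trace : (M * (1 - (c : ℂ) • of fun _ _ => 1 : Matrix ι ι ℂ) * Mᴴ).trace =
      ((∑ i, (∑ α, ‖M i α‖ ^ 2 - c * ‖∑ α, M i α‖ ^ 2) : ℝ) : ℂ) := by
    simp only [trace, diag_apply, mul_apply (M := _ * _), h_entry, conjTranspose_apply,
      RCLike.star_def, sub_mul, Finset.sum_sub_distrib, Complex.mul_conj', mul_assoc,
      ← Finset.mul_sum, ← map_sum]
    push_cast
    rfl
  rw [h_trace, Complex.ofReal_re]

end Replicas

theorem statement14_general (N n r : ℕ)
    (A : Matrix (Fin N) (Fin n) ℂ)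
    (S : Finset (Fin n → ℂ))
    (p : (Fin n → ℂ) → ℝ) :
    let Sm : Matrix (Fin (r + 1)) (Fin (r + 1)) ℂ :=
      1 - ((r + 1 : ℂ))⁻¹ • Matrix.of fun _ _ => 1
    let M : (Fin (r + 1) → (Fin n → ℂ)) → Matrix (Fin N) (Fin (r + 1)) ℂ :=
      fun t => Matrix.of fun i α => (A *ᵥ t α) i
    (1 / Real.pi ^ N) *
        ∫ y : Fin N → ℂ,
          (∑ s ∈ S, p s * Real.exp (-(∑ i, ‖y i - (A *ᵥ s) i‖ ^ 2))) ^ (r + 1) =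
      ∑ t ∈ Fintype.piFinset (fun _ : Fin (r + 1) => S),
        (∏ α, p (t α)) * ((1 / (r + 1 : ℝ) ^ N) *
          Real.exp (-(Matrix.trace (M t * Sm * (M t)ᴴ)).re)) := by
  intro Sm M
  have h_Sm : Sm = 1 - (((Fintype.card (Fin (r + 1)) : ℝ)⁻¹ : ℝ) : ℂ) • of fun _ _ => 1 := by
    simp [Sm]
  have h_replica (t : Fin (r + 1) → Fin n → ℂ) :
      ∫ y : Fin N → ℂ, Real.exp (-∑ α, ∑ i, ‖y i - (A *ᵥ t α) i‖ ^ 2) =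
        Real.pi ^ N * ((1 / (r + 1 : ℝ) ^ N) * Real.exp (-(M t * Sm * (M t)ᴴ).trace.re)) := by
    rw [integral_exp_neg_sum_sum_norm_sub_sq (fun α => A *ᵥ t α), h_Sm,
      re_trace_mul_one_sub_smul_ones_mul_conjTranspose]
    simp only [M, of_apply, Fintype.card_fin, div_pow]
    push_cast
    ring
  simp_rw [sum_mul_exp_neg_pow]
  rw [integral_finsetSum _ fun t _ => (Integrable.of_integral_ne_zero
    (by rw [h_replica]; positivity)).const_mul _, Finset.mul_sum]
  refine Finset.sum_congr rfl fun t _ => ?_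
  rw [integral_const_mul, h_replica]
  field_simp

/-- replica moment identity for a finite-alphabet input distribution. -/
theorem statement14 (N n r : ℕ) (hN : 0 < N) (hn : 0 < n)
    (A : Matrix (Fin N) (Fin n) ℂ)
    (S : Finset (Fin n → ℂ)) (hS : S.Nonempty)
    (p : (Fin n → ℂ) → ℝ)
    (hp0 : ∀ s ∈ S, 0 ≤ p s) (hp1 : ∀ s ∈ S, p s ≤ 1)
    (hsum : ∑ s ∈ S, p s = 1) :
    let Sm : Matrix (Fin (r + 1)) (Fin (r + 1)) ℂ :=
      1 - ((r + 1 : ℂ))⁻¹ • Matrix.of fun _ _ => 1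
    let M : (Fin (r + 1) → (Fin n → ℂ)) → Matrix (Fin N) (Fin (r + 1)) ℂ :=
      fun t => Matrix.of fun i α => (A *ᵥ t α) i
    (1 / Real.pi ^ N) *
        ∫ y : Fin N → ℂ,
          (∑ s ∈ S, p s * Real.exp (-(∑ i, ‖y i - (A *ᵥ s) i‖ ^ 2))) ^ (r + 1) =
      ∑ t ∈ Fintype.piFinset (fun _ : Fin (r + 1) => S),
        (∏ α, p (t α)) * ((1 / (r + 1 : ℝ) ^ N) *
          Real.exp (-(Matrix.trace (M t * Sm * (M t)ᴴ)).re)) :=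
  statement14_general N n r A S p
end

section
/- Let N be a positive integer, let r ≥ 0 be an integer, let 𝟙 denote the all-ones column vector of length r+1, let J = 𝟙𝟙ᴴ, and let Σ = I_{r+1} − (1/(r+1))·J. Let R be an N×N complex matrix and let c, q be complex numbers. Then det( I_{(r+1)N} + ((q·J + (c−q)·I_{r+1})·Σ) ⊗ R ) = det( I_N + (c−q)·R )^r, where ⊗ denotes the Kronecker product. -/
open Matrix
open scoped Kronecker
noncomputable def uu (r : ℕ) : ℂ := ((r : ℂ) + 1)⁻¹
noncomputable def Pm (r : ℕ) : Matrix (Fin (r+1)) (Fin (r+1)) ℂ :=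
  Matrix.of fun j i => if i = 0 then 1 else (if j = i then 1 else 0) - (if j = 0 then 1 else 0)
noncomputable def Qm (r : ℕ) : Matrix (Fin (r+1)) (Fin (r+1)) ℂ :=
  Matrix.of fun i j => if i = 0 then uu r else (if i = j then 1 else 0) - uu r
lemma cast_ne (r : ℕ) : ((r : ℂ) + 1) ≠ 0 := by
  have := Nat.cast_add_one_ne_zero (R := ℂ) r
  push_cast at this
  exact this

lemma hPQ (r : ℕ) : Pm r * Qm r = 1 := by
  have hu : (r : ℂ) * uu r + uu r = 1 := by
    have h := mul_inv_cancel₀ (cast_ne r); rw [uu]; ring_nf; ring_nf at h; linear_combination h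
  ext j k
  rw [Matrix.mul_apply, Fin.sum_univ_succ]
  rcases Fin.eq_zero_or_eq_succ j with hj | ⟨j', hj⟩ <;>
    rcases Fin.eq_zero_or_eq_succ k with hk | ⟨k', hk⟩ <;>
    subst hj <;> subst hk <;>
    simp [Pm, Qm, Matrix.one_apply, Fin.succ_ne_zero, (Fin.succ_ne_zero _).symm,
      Fin.succ_inj, sub_mul, mul_sub, Finset.sum_sub_distrib, Finset.sum_add_distrib, Finset.sum_ite_eq,
      Finset.sum_ite_eq'] <;>
    linear_combination hu

noncomputable def dd (r : ℕ) : Fin (r+1) → ℂ := fun i => if i = 0 then 0 else 1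

lemma hSP (r : ℕ) :
    ((1 : Matrix (Fin (r+1)) (Fin (r+1)) ℂ) - uu r • Matrix.of fun _ _ => (1:ℂ)) * Pm r
      = Pm r * Matrix.diagonal (dd r) := by
  have h := mul_inv_cancel₀ (cast_ne r)
  have hu : (r : ℂ) * uu r + uu r = 1 := by
    rw [uu]; ring_nf; ring_nf at h; linear_combination h
  ext j i
  rw [Matrix.mul_apply, Fin.sum_univ_succ, Matrix.mul_diagonal]
  rcases Fin.eq_zero_or_eq_succ j with hj | ⟨j', hj⟩ <;>
    rcases Fin.eq_zero_or_eq_succ i with hi | ⟨i', hi⟩ <;>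
    subst hj <;> subst hi <;>
    simp [Pm, dd, Matrix.one_apply, Matrix.sub_apply, Matrix.smul_apply, Fin.succ_ne_zero,
      (Fin.succ_ne_zero _).symm,
      Fin.succ_inj, sub_mul, mul_sub, Finset.sum_sub_distrib, Finset.sum_add_distrib,
      Finset.sum_ite_eq, Finset.sum_ite_eq'] <;>
    first
      | ring1
      | linear_combination hu
      | linear_combination -hu
      | linear_combination 2*hu
      | linear_combination -2*hu

lemma hblock (r N : ℕ) (S : Matrix (Fin N) (Fin N) ℂ) :
    (1 : Matrix (Fin (r+1) × Fin N) (Fin (r+1) × Fin N) ℂ) + Matrix.diagonal (dd r) ⊗ₖ S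
      = (Matrix.reindex (Equiv.prodComm (Fin N) (Fin (r+1))) (Equiv.prodComm (Fin N) (Fin (r+1))))
          (Matrix.blockDiagonal fun i => (1 : Matrix (Fin N) (Fin N) ℂ) + dd r i • S) := by
  ext ⟨i, j⟩ ⟨i', j'⟩
  by_cases h : i = i' <;>
    simp [Matrix.blockDiagonal_apply, Matrix.one_apply, Matrix.diagonal, Prod.ext_iff, h,
      Matrix.kroneckerMap_apply]

lemma key (r N : ℕ) (S : Matrix (Fin N) (Fin N) ℂ) :
    Matrix.det ((1 : Matrix (Fin (r+1) × Fin N) (Fin (r+1) × Fin N) ℂ) +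
      ((1 : Matrix (Fin (r+1)) (Fin (r+1)) ℂ) - uu r • Matrix.of fun _ _ => (1:ℂ)) ⊗ₖ S)
    = Matrix.det (1 + S) ^ r := by
  set Sm : Matrix (Fin (r+1)) (Fin (r+1)) ℂ :=
    (1 : Matrix (Fin (r+1)) (Fin (r+1)) ℂ) - uu r • Matrix.of fun _ _ => (1:ℂ) with hSm
  have hfact : Pm r * Matrix.diagonal (dd r) * Qm r = Sm := by
    calc Pm r * Matrix.diagonal (dd r) * Qm r = (Sm * Pm r) * Qm r := by rw [hSP r]
    _ = Sm * (Pm r * Qm r) := by rw [mul_assoc]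
    _ = Sm := by rw [hPQ r, mul_one]
  have key2 : (1 : Matrix (Fin (r+1) × Fin N) (Fin (r+1) × Fin N) ℂ) + Sm ⊗ₖ S
      = (Pm r ⊗ₖ (1 : Matrix (Fin N) (Fin N) ℂ)) *
        ((1 : Matrix (Fin (r+1) × Fin N) (Fin (r+1) × Fin N) ℂ) + Matrix.diagonal (dd r) ⊗ₖ S) *
        (Qm r ⊗ₖ (1 : Matrix (Fin N) (Fin N) ℂ)) := by
    rw [mul_add, add_mul, ← Matrix.mul_kronecker_mul, mul_one, ← Matrix.mul_kronecker_mul,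
      ← Matrix.mul_kronecker_mul, hPQ r, hfact, one_mul, one_mul, mul_one,
      Matrix.one_kronecker_one]
  have hdetPQ : Matrix.det (Pm r ⊗ₖ (1 : Matrix (Fin N) (Fin N) ℂ)) *
      Matrix.det (Qm r ⊗ₖ (1 : Matrix (Fin N) (Fin N) ℂ)) = 1 := by
    rw [← Matrix.det_mul, ← Matrix.mul_kronecker_mul, hPQ r, mul_one,
      Matrix.one_kronecker_one, Matrix.det_one]
  rw [key2, Matrix.det_mul, Matrix.det_mul, hblock, Matrix.det_reindex_self,
    Matrix.det_blockDiagonal]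
  rw [mul_comm, ← mul_assoc, mul_comm (Matrix.det (Qm r ⊗ₖ (1 : Matrix (Fin N) (Fin N) ℂ))),
    hdetPQ, one_mul]
  rw [Fin.prod_univ_succ]
  simp [dd, Fin.succ_ne_zero]

/-- replica-symmetric Kronecker determinant identity. -/
theorem statement15 (N r : ℕ) (hN : 0 < N)
    (R : Matrix (Fin N) (Fin N) ℂ) (c q : ℂ) :
    let J : Matrix (Fin (r + 1)) (Fin (r + 1)) ℂ := Matrix.of fun _ _ => 1
    let Sm : Matrix (Fin (r + 1)) (Fin (r + 1)) ℂ := 1 - ((r + 1 : ℂ))⁻¹ • J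
    Matrix.det ((1 : Matrix (Fin (r + 1) × Fin N) (Fin (r + 1) × Fin N) ℂ) +
        ((q • J + (c - q) • 1) * Sm) ⊗ₖ R) =
      Matrix.det (1 + (c - q) • R) ^ r := by
  intro J Sm
  have hJJ : J * J = ((r : ℂ) + 1) • J := by
    ext i j
    simp [J, Matrix.mul_apply, Finset.card_univ]
  have hJS : J * Sm = 0 := by
    show J * (1 - ((r + 1 : ℂ))⁻¹ • J) = 0
    rw [mul_sub, mul_one, Matrix.mul_smul, hJJ, smul_smul, inv_mul_cancel₀ (cast_ne r),
      one_smul, sub_self]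
  have hA : (q • J + (c - q) • 1) * Sm = (c - q) • Sm := by
    rw [add_mul, Matrix.smul_mul, hJS, smul_zero, zero_add, Matrix.smul_mul, one_mul]
  rw [hA, Matrix.smul_kronecker, ← Matrix.kronecker_smul]
  exact key r N ((c - q) • R)
end

section
/- The finite-alphabet mutual information functional depends on the precoder only through the quadratic form Bᴴ T B: let n be a positive integer, let T be an n×n Hermitian positive semidefinite complex matrix with positive semidefinite square root T^{1/2}, and let a₁, …, a_M ∈ ℂ^n be a finite list of signal vectors (M ≥ 1). For an n×n complex matrix B define J(B) = (1/M) Σ_{m=1}^{M} ∫ Dv exp(−‖v‖²)·(−log₂ Σ_{p=1}^{M} exp(−(‖T^{1/2} B (a_p − a_m) + v‖² − ‖v‖²))). If B₁ and B₂ are n×n complex matrices with B₁ᴴ T B₁ = B₂ᴴ T B₂, then J(B₁) = J(B₂). -/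
open MeasureTheory Matrix
open scoped ComplexOrder ENNReal NNReal


private lemma sum_sq_eq_re_dot {n : ℕ} (w : Fin n → ℂ) :
    (∑ i, ‖w i‖ ^ 2 : ℝ) = (dotProduct (star w) w).re := by
  rw [dotProduct, Complex.re_sum]
  refine Finset.sum_congr rfl fun i _ => ?_
  have : (star w) i * w i = (starRingEnd ℂ) (w i) * w i := rfl
  rw [this, mul_comm, Complex.mul_conj]
  simp [Complex.normSq_eq_norm_sq, ← Complex.ofReal_pow]

private lemma mulVec_sum_sq_eq {n : ℕ} {A₁ A₂ : Matrix (Fin n) (Fin n) ℂ}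
    (h : A₁ᴴ * A₁ = A₂ᴴ * A₂) (v : Fin n → ℂ) :
    (∑ i, ‖(A₁ *ᵥ v) i‖ ^ 2 : ℝ) = ∑ i, ‖(A₂ *ᵥ v) i‖ ^ 2 := by
  have key : ∀ A : Matrix (Fin n) (Fin n) ℂ,
      (∑ i, ‖(A *ᵥ v) i‖ ^ 2 : ℝ) = (dotProduct (star v) ((Aᴴ * A) *ᵥ v)).re := by
    intro A
    rw [sum_sq_eq_re_dot, Matrix.star_mulVec, ← Matrix.mulVec_mulVec,
      ← Matrix.dotProduct_mulVec]
  rw [key A₁, key A₂, h]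

private lemma sum_sq_eq_norm_sq {n : ℕ} (x : EuclideanSpace ℂ (Fin n)) :
    (∑ i, ‖x i‖ ^ 2 : ℝ) = ‖x‖ ^ 2 := by
  rw [EuclideanSpace.norm_eq, Real.sq_sqrt]
  positivity

private lemma exists_phi {n : ℕ} {A₁ A₂ : Matrix (Fin n) (Fin n) ℂ}
    (hnorm : ∀ v : Fin n → ℂ, (∑ i, ‖(A₁ *ᵥ v) i‖ ^ 2 : ℝ) = ∑ i, ‖(A₂ *ᵥ v) i‖ ^ 2) :
    ∃ φ : (Fin n → ℂ) → (Fin n → ℂ),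
      MeasurePreserving φ volume volume ∧
      MeasurableEmbedding φ ∧
      (∀ v, (∑ i, ‖φ v i‖ ^ 2 : ℝ) = ∑ i, ‖v i‖ ^ 2) ∧
      (∀ u v, φ (u + v) = φ u + φ v) ∧
      (∀ d, φ (A₁ *ᵥ d) = A₂ *ᵥ d) := by
  classical
  let ι : (Fin n → ℂ) ≃ₗ[ℂ] EuclideanSpace ℂ (Fin n) :=
    (WithLp.linearEquiv 2 ℂ (Fin n → ℂ)).symm
  have hι : ∀ (v : Fin n → ℂ) (i : Fin n), (ι v) i = v i := fun v i => rfl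
  have hιs : ∀ (x : EuclideanSpace ℂ (Fin n)) (i : Fin n), (ι.symm x) i = x i := fun x i => rfl
  let f₁ : EuclideanSpace ℂ (Fin n) →ₗ[ℂ] EuclideanSpace ℂ (Fin n) :=
    ι.toLinearMap ∘ₗ (Matrix.mulVecLin A₁) ∘ₗ ι.symm.toLinearMap
  let f₂ : EuclideanSpace ℂ (Fin n) →ₗ[ℂ] EuclideanSpace ℂ (Fin n) :=
    ι.toLinearMap ∘ₗ (Matrix.mulVecLin A₂) ∘ₗ ι.symm.toLinearMap
  have hf₁ : ∀ x, f₁ x = ι (A₁ *ᵥ (ι.symm x)) := fun x => rfl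
  have hf₂ : ∀ x, f₂ x = ι (A₂ *ᵥ (ι.symm x)) := fun x => rfl
  have hfnorm : ∀ x, ‖f₁ x‖ = ‖f₂ x‖ := by
    intro x
    have h1 : (‖f₁ x‖ : ℝ) ^ 2 = ‖f₂ x‖ ^ 2 := by
      rw [← sum_sq_eq_norm_sq (f₁ x), ← sum_sq_eq_norm_sq (f₂ x)]
      rw [hf₁, hf₂]
      simpa [hι] using hnorm (ι.symm x)
    nlinarith [norm_nonneg (f₁ x), norm_nonneg (f₂ x), h1]
  have hker : LinearMap.ker f₁ ≤ LinearMap.ker f₂ := by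
    intro x hx
    rw [LinearMap.mem_ker] at hx ⊢
    have := hfnorm x
    rw [hx, norm_zero] at this
    exact norm_eq_zero.mp this.symm
  let L₀ : (EuclideanSpace ℂ (Fin n) ⧸ LinearMap.ker f₁) →ₗ[ℂ] EuclideanSpace ℂ (Fin n) :=
    Submodule.liftQ (LinearMap.ker f₁) f₂ hker
  let eq₁ := f₁.quotKerEquivRange
  let L : LinearMap.range f₁ →ₗ[ℂ] EuclideanSpace ℂ (Fin n) := L₀ ∘ₗ eq₁.symm.toLinearMap
  have hL : ∀ (x : EuclideanSpace ℂ (Fin n)) (hx : f₁ x ∈ LinearMap.range f₁),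
      L ⟨f₁ x, hx⟩ = f₂ x := by
    intro x hx
    have h1 : eq₁.symm ⟨f₁ x, hx⟩ = Submodule.Quotient.mk x := by
      rw [LinearEquiv.symm_apply_eq]
      exact Subtype.ext (f₁.quotKerEquivRange_apply_mk x).symm
    show L₀ (eq₁.symm ⟨f₁ x, hx⟩) = f₂ x
    rw [h1]
    exact Submodule.liftQ_apply _ f₂ x
  let Li : LinearMap.range f₁ →ₗᵢ[ℂ] EuclideanSpace ℂ (Fin n) := by
    refine ⟨L, fun u => ?_⟩
    obtain ⟨x, hx⟩ := u.2
    have hu : u = ⟨f₁ x, by exact hx ▸ u.2⟩ := Subtype.ext hx.symm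
    rw [hu, hL]
    rw [← hfnorm x]
    rfl
  let g : EuclideanSpace ℂ (Fin n) →ₗᵢ[ℂ] EuclideanSpace ℂ (Fin n) := Li.extend
  have hg : ∀ x, g (f₁ x) = f₂ x := by
    intro x
    have hmem : f₁ x ∈ LinearMap.range f₁ := LinearMap.mem_range_self f₁ x
    have := Li.extend_apply ⟨f₁ x, hmem⟩
    rw [show ((⟨f₁ x, hmem⟩ : LinearMap.range f₁) : EuclideanSpace ℂ (Fin n)) = f₁ x from rfl] at this
    rw [this]
    exact hL x hmem
  let φ : (Fin n → ℂ) → (Fin n → ℂ) := fun v => ι.symm (g (ι v))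
  have hφadd : ∀ u v, φ (u + v) = φ u + φ v := by
    intro u v
    simp only [φ, map_add]
  have hφnorm : ∀ v, (∑ i, ‖φ v i‖ ^ 2 : ℝ) = ∑ i, ‖v i‖ ^ 2 := by
    intro v
    have h1 : (∑ i, ‖φ v i‖ ^ 2 : ℝ) = ∑ i, ‖(g (ι v)) i‖ ^ 2 := rfl
    rw [h1, sum_sq_eq_norm_sq, g.norm_map, ← sum_sq_eq_norm_sq]
    rfl
  have hφA : ∀ d, φ (A₁ *ᵥ d) = A₂ *ᵥ d := by
    intro d
    have h1 : ι (A₁ *ᵥ d) = f₁ (ι d) := by rw [hf₁]; rw [LinearEquiv.symm_apply_apply]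
    show ι.symm (g (ι (A₁ *ᵥ d))) = A₂ *ᵥ d
    rw [h1, hg, hf₂, LinearEquiv.symm_apply_apply, LinearEquiv.symm_apply_apply]
  -- linear equiv for φ
  let gE : EuclideanSpace ℂ (Fin n) ≃ₗᵢ[ℂ] EuclideanSpace ℂ (Fin n) :=
    g.toLinearIsometryEquiv rfl
  have hgE : ∀ x, gE x = g x := fun x => rfl
  let eφ : (Fin n → ℂ) ≃ₗ[ℂ] (Fin n → ℂ) :=
    ι ≪≫ₗ gE.toLinearEquiv ≪≫ₗ ι.symm
  have heφ : ∀ v, eφ v = φ v := fun v => rfl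
  have hME : MeasurableEmbedding φ :=
    (eφ.toContinuousLinearEquiv.toHomeomorph.toMeasurableEquiv).measurableEmbedding
  have hmeas : Measurable φ := hME.measurable
  have hfun : ⇑eφ = φ := rfl
  haveI hHaar : (volume.map φ).IsAddHaarMeasure := by
    rw [← hfun]; exact Measure.MapLinearEquiv.isAddHaarMeasure volume eφ
  have hsmul := Measure.isAddLeftInvariant_eq_smul (volume.map φ) volume
  set c := (volume.map φ).addHaarScalarFactor volume with hc
  let S : Set (Fin n → ℂ) := {v | (∑ i, ‖v i‖ ^ 2 : ℝ) ≤ 1}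
  have hScont : Continuous fun v : Fin n → ℂ => (∑ i, ‖v i‖ ^ 2 : ℝ) := by fun_prop
  have hSclosed : IsClosed S := isClosed_le hScont continuous_const
  have hSmeas : MeasurableSet S := hSclosed.measurableSet
  have hpre : φ ⁻¹' S = S := by
    ext v
    simp only [S, Set.mem_preimage, Set.mem_setOf_eq, hφnorm v]
  have hmap : (volume.map φ) S = volume S := by
    rw [Measure.map_apply hmeas hSmeas, hpre]
  have hSsub : S ⊆ Metric.closedBall 0 1 := by
    intro v hv
    simp only [Metric.mem_closedBall, dist_zero_right]
    rw [pi_norm_le_iff_of_nonneg zero_le_one]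
    intro i
    have h2 : ‖v i‖ ^ 2 ≤ 1 :=
      le_trans (Finset.single_le_sum (f := fun i => ‖v i‖ ^ 2)
        (fun i _ => by positivity) (Finset.mem_univ i)) hv
    nlinarith [norm_nonneg (v i)]
  have hScompact : IsCompact S :=
    (isCompact_closedBall (0 : Fin n → ℂ) 1).of_isClosed_subset hSclosed hSsub
  have hball : Metric.ball (0 : Fin n → ℂ) (1 / ((n : ℝ) + 1)) ⊆ S := by
    intro v hv
    simp only [Metric.mem_ball, dist_zero_right] at hv
    show (∑ i, ‖v i‖ ^ 2 : ℝ) ≤ 1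
    have hpos : (0 : ℝ) < (n : ℝ) + 1 := by positivity
    calc (∑ i, ‖v i‖ ^ 2 : ℝ) ≤ ∑ _i : Fin n, (1 / ((n : ℝ) + 1)) ^ 2 := by
          refine Finset.sum_le_sum fun i _ => ?_
          have h3 : ‖v i‖ ≤ ‖v‖ := norm_le_pi_norm v i
          nlinarith [norm_nonneg (v i), norm_nonneg v]
      _ = (n : ℝ) * (1 / ((n : ℝ) + 1)) ^ 2 := by
          simp [Finset.sum_const, Finset.card_univ]
      _ ≤ 1 := by
          rw [div_pow, one_pow, mul_one_div, div_le_one (by positivity)]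
          nlinarith [hpos]
  have hSpos : 0 < volume S :=
    lt_of_lt_of_le (Metric.measure_ball_pos volume 0 (by positivity)) (measure_mono hball)
  have hSne : volume S ≠ ⊤ := hScompact.measure_lt_top.ne
  have h1 : (c : ℝ≥0∞) * volume S = 1 * volume S := by
    rw [one_mul]
    conv_rhs => rw [← hmap]
    rw [hsmul]
    rw [Measure.smul_apply, ENNReal.smul_def, smul_eq_mul]
  have hc1 : (c : ℝ≥0∞) = 1 :=
    (ENNReal.mul_left_inj hSpos.ne' hSne).mp h1
  have hmapeq : volume.map φ = volume := by
    rw [hsmul, show c = 1 from ENNReal.coe_eq_one.mp hc1, one_smul]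
  exact ⟨φ, ⟨hmeas, hmapeq⟩, hME, hφnorm, hφadd, hφA⟩


/-- the finite-alphabet mutual-information functional depends on the
precoder `B` only through the quadratic form `Bᴴ T B`. -/
theorem statement16 (n M : ℕ) (hn : 0 < n) (hM : 1 ≤ M)
    (T : Matrix (Fin n) (Fin n) ℂ) (hT : T.PosSemidef)
    (sqrtT : Matrix (Fin n) (Fin n) ℂ) (hs : sqrtT.PosSemidef) (hsq : sqrtT * sqrtT = T)
    (a : Fin M → Fin n → ℂ)
    (B₁ B₂ : Matrix (Fin n) (Fin n) ℂ)
    (hQ : B₁ᴴ * T * B₁ = B₂ᴴ * T * B₂) :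
    let J : Matrix (Fin n) (Fin n) ℂ → ℝ := fun B =>
      (1 / (M : ℝ)) * ∑ m : Fin M, (1 / Real.pi ^ n) *
        ∫ v : Fin n → ℂ,
          Real.exp (-(∑ i, ‖v i‖ ^ 2)) *
            (-(Real.logb 2 (∑ p : Fin M, Real.exp
              (-((∑ i, ‖(sqrtT *ᵥ (B *ᵥ (a p - a m))) i + v i‖ ^ 2) -
                ∑ i, ‖v i‖ ^ 2)))))
    J B₁ = J B₂ := by
  intro J
  have hH : sqrtTᴴ = sqrtT := hs.isHermitian
  have key : ∀ B : Matrix (Fin n) (Fin n) ℂ,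
      (sqrtT * B)ᴴ * (sqrtT * B) = Bᴴ * T * B := by
    intro B
    rw [Matrix.conjTranspose_mul, hH, Matrix.mul_assoc, ← Matrix.mul_assoc sqrtT, hsq,
      ← Matrix.mul_assoc]
  have hA : (sqrtT * B₁)ᴴ * (sqrtT * B₁) = (sqrtT * B₂)ᴴ * (sqrtT * B₂) := by
    rw [key, key, hQ]
  obtain ⟨φ, hMP, hME, hP1, hadd, hP2⟩ := exists_phi (mulVec_sum_sq_eq hA)
  simp only [J]
  refine congrArg (fun t => (1 / (M : ℝ)) * t) ?_
  refine Finset.sum_congr rfl fun m _ => ?_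
  refine congrArg (fun t => (1 / Real.pi ^ n) * t) ?_
  refine Eq.trans ?_ (hMP.integral_comp hME _)
  refine integral_congr_ae (Filter.Eventually.of_forall fun w => ?_)
  simp only [Matrix.mulVec_mulVec]
  have hpt : ∀ p : Fin M,
      (∑ i, ‖((sqrtT * B₂) *ᵥ (a p - a m)) i + φ w i‖ ^ 2 : ℝ) =
        ∑ i, ‖((sqrtT * B₁) *ᵥ (a p - a m)) i + w i‖ ^ 2 := by
    intro p
    have h1 : ((sqrtT * B₂) *ᵥ (a p - a m)) + φ w =
        φ ((sqrtT * B₁) *ᵥ (a p - a m) + w) := by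
      rw [hadd, hP2]
    calc (∑ i, ‖((sqrtT * B₂) *ᵥ (a p - a m)) i + φ w i‖ ^ 2 : ℝ)
        = ∑ i, ‖(φ ((sqrtT * B₁) *ᵥ (a p - a m) + w)) i‖ ^ 2 := by rw [← h1]; rfl
      _ = ∑ i, ‖((sqrtT * B₁) *ᵥ (a p - a m) + w) i‖ ^ 2 := hP1 _
      _ = ∑ i, ‖((sqrtT * B₁) *ᵥ (a p - a m)) i + w i‖ ^ 2 := rfl
  rw [hP1 w]
  simp only [hpt]
end
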